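/- arXiv:1801.09716 — 2 statements merged into one kernel-verified Lean document; each statement's English description precedes it below -/
import Mathlib

section
/- Let S be an isometry on a complex Hilbert space H and let L be a closed S-reducing subspace of H, with P_L the orthogonal projection onto L and P^iso the orthogonal projection onto H^iso. Then the following are equivalent: (1) S is a pure isometry on L; (2) L ⊆ H^iso; (3) P_L ∘ P^iso = P_L. -/
open ContinuousLinearMap

variable {H : Type*} [NormedAddCommGroup H] [InnerProductSpace ℂ H] [CompleteSpace H]

/-- The purely isometric part `H^iso`: the closed linear span of the subspaces
`S^k (ker S*)`, `k ≥ 0`. -/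
noncomputable def Hiso (S : H →L[ℂ] H) : Submodule ℂ H :=
  (⨆ k : ℕ, Submodule.map ((S ^ k : H →L[ℂ] H) : H →ₗ[ℂ] H) (LinearMap.ker ((adjoint S : H →L[ℂ] H) : H →ₗ[ℂ] H))).topologicalClosure

/-- The unitary part `H^uni := ⋂_{k≥0} S^k (H)`. -/
noncomputable def Huni (S : H →L[ℂ] H) : Submodule ℂ H :=
  ⨅ k : ℕ, LinearMap.range ((S ^ k : H →L[ℂ] H) : H →ₗ[ℂ] H)

/-- A closed subspace `L` reduces `S` if it is invariant under `S` and `S*`. -/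
def Reduces (S : H →L[ℂ] H) (L : Submodule ℂ H) : Prop :=
  (∀ x ∈ L, S x ∈ L) ∧ ∀ x ∈ L, adjoint S x ∈ L

/-- `S` is unitary on `L`: `S` maps `L` onto `L`. -/
def UnitaryOn (S : H →L[ℂ] H) (L : Submodule ℂ H) : Prop :=
  Submodule.map (S : H →ₗ[ℂ] H) L = L

/-- `S` is a pure isometry on the `S`-invariant subspace `L`: `{0}` is the only
`S`-invariant closed subspace of `L` on which `S` is unitary. -/
def PureOn (S : H →L[ℂ] H) (L : Submodule ℂ H) : Prop :=
  ∀ M : Submodule ℂ H, IsClosed (M : Set H) → M ≤ L → Submodule.map (S : H →ₗ[ℂ] H) M = M → M = ⊥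

/-- `P` is the orthogonal projection of `H` onto the subspace `K`. -/
def IsOrthoProj (P : H →L[ℂ] H) (K : Submodule ℂ H) : Prop :=
  ∀ x, P x ∈ K ∧ x - P x ∈ Kᗮ

/-! A closed subspace `M` with `S M = M` is `S*`-invariant and orthogonal to `ker S*`, hence to
every `S^k (ker S*)`; so it is orthogonal to `H^iso`, which gives (2) ⇒ (1). Conversely, let `K` be
the closed span of the `S^k (ker S* ⊓ L)`, the `H^iso` of `S` restricted to `L`. Since a vector of
`L` orthogonal to `ker S* ⊓ L` lies in `S L`, the isometry `S` maps `L ⊓ Kᗮ` onto itself; purity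
forces `L ⊓ Kᗮ = 0`, so `L = K ≤ H^iso`. Finally (2) ⇔ (3) is the usual comparison of orthogonal
projections. -/

open scoped InnerProductSpace

section Isometry

variable {𝕜 E : Type*} [RCLike 𝕜] [NormedAddCommGroup E] [InnerProductSpace 𝕜 E] [CompleteSpace E]
  {T : E →L[𝕜] E}

lemma adjoint_apply_apply_of_adjoint_mul_self (hT : adjoint T * T = 1) (x : E) :
    adjoint T (T x) = x := by
  simpa using congr($hT x)

lemma inner_map_map_of_adjoint_mul_self (hT : adjoint T * T = 1) (x y : E) :
    ⟪T x, T y⟫_𝕜 = ⟪x, y⟫_𝕜 := by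
  rw [← adjoint_inner_right, adjoint_apply_apply_of_adjoint_mul_self hT]

lemma apply_adjoint_apply_eq_self_of_mem_orthogonal (hT : adjoint T * T = 1)
    {L : Submodule 𝕜 E} (hL : ∀ x ∈ L, T x ∈ L) (hL' : ∀ x ∈ L, adjoint T x ∈ L) {y : E}
    (hyL : y ∈ L) (hy : y ∈ (LinearMap.ker ((adjoint T : E →L[𝕜] E) : E →ₗ[𝕜] E) ⊓ L)ᗮ) :
    T (adjoint T y) = y := by
  set z := y - T (adjoint T y)
  have hz_ker : adjoint T z = 0 := by
    simp [z, adjoint_apply_apply_of_adjoint_mul_self hT]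
  have hzL : z ∈ L := L.sub_mem hyL (hL _ (hL' _ hyL))
  have hzy : ⟪z, y⟫_𝕜 = 0 := (Submodule.mem_orthogonal _ _).1 hy z ⟨hz_ker, hzL⟩
  have hzTy : ⟪z, T (adjoint T y)⟫_𝕜 = 0 := by
    rw [← adjoint_inner_left, hz_ker, inner_zero_left]
  have hzz : ⟪z, z⟫_𝕜 = 0 := by
    rw [inner_sub_right, hzy, hzTy, sub_zero]
  exact (sub_eq_zero.1 (inner_self_eq_zero.1 hzz)).symm

end Isometry

lemma pow_apply_mem {R M : Type*} [Semiring R] [AddCommMonoid M] [Module R M] [TopologicalSpace M]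
    {T : M →L[R] M} {L : Submodule R M} (hL : ∀ x ∈ L, T x ∈ L) (k : ℕ) {x : M} (hx : x ∈ L) :
    (T ^ k) x ∈ L := by
  induction k with
  | zero => simpa using hx
  | succ k ih => rw [pow_succ']; exact hL _ ih

namespace IsOrthoProj

variable {E : Type*} [NormedAddCommGroup E] [InnerProductSpace ℂ E] {P Q : E →L[ℂ] E}
  {K L : Submodule ℂ E}

lemma apply_eq_zero_iff (hP : IsOrthoProj P K) {x : E} : P x = 0 ↔ x ∈ Kᗮ := by
  refine ⟨fun h => by simpa [h] using (hP x).2, fun hx => ?_⟩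
  have hPx : P x ∈ Kᗮ := by simpa using Kᗮ.sub_mem hx (hP x).2
  exact inner_self_eq_zero.1 ((Submodule.mem_orthogonal' _ _).1 hPx _ (hP x).1)

lemma mul_eq_left_iff [CompleteSpace E] (hP : IsOrthoProj P L) (hQ : IsOrthoProj Q K)
    (hK : IsClosed (K : Set E)) : P * Q = P ↔ L ≤ K := by
  constructor
  · intro h
    have hKL : Kᗮ ≤ Lᗮ := fun x hx => by
      rw [← hP.apply_eq_zero_iff, ← congr($h x)]
      change P (Q x) = 0
      rw [hQ.apply_eq_zero_iff.2 hx, map_zero]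
    have hKK : Kᗮᗮ = K := by
      rw [Submodule.orthogonal_orthogonal_eq_closure, hK.submodule_topologicalClosure_eq]
    simpa [hKK] using L.le_orthogonal_orthogonal.trans (Submodule.orthogonal_le hKL)
  · intro h
    ext x
    change P (Q x) = P x
    rw [eq_comm, ← sub_eq_zero, ← map_sub, hP.apply_eq_zero_iff]
    exact Submodule.orthogonal_le h (hQ x).2

end IsOrthoProj

/-- The closed span of the `T ^ k W` is `H^iso` when `W = ker T*`, and `H^iso` of the restriction
of `T` to a reducing subspace `L` when `W = ker T* ⊓ L`. -/
def wanderingSpan {𝕜 E : Type*} [RCLike 𝕜] [NormedAddCommGroup E] [InnerProductSpace 𝕜 E]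
    (T : E →L[𝕜] E) (W : Submodule 𝕜 E) : Submodule 𝕜 E :=
  ⨆ k : ℕ, W.map ((T ^ k : E →L[𝕜] E) : E →ₗ[𝕜] E)

lemma mem_orthogonal_wanderingSpan {𝕜 E : Type*} [RCLike 𝕜] [NormedAddCommGroup E]
    [InnerProductSpace 𝕜 E] {T : E →L[𝕜] E} {W : Submodule 𝕜 E} {x : E} :
    x ∈ (wanderingSpan T W)ᗮ ↔ ∀ k : ℕ, ∀ w ∈ W, ⟪(T ^ k) w, x⟫_𝕜 = 0 := by
  simp only [wanderingSpan, ← Submodule.iInf_orthogonal, Submodule.mem_iInf,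
    Submodule.mem_orthogonal, Submodule.mem_map, forall_exists_index, and_imp,
    forall_apply_eq_imp_iff₂]
  rfl

variable {S : H →L[ℂ] H} {L : Submodule ℂ H}

lemma map_inf_orthogonal_wanderingSpan (hS : adjoint S * S = 1) (hL : Reduces S L) :
    (L ⊓ (wanderingSpan S (LinearMap.ker ((adjoint S : H →L[ℂ] H) : H →ₗ[ℂ] H) ⊓ L))ᗮ).map
      (S : H →ₗ[ℂ] H) =
      L ⊓ (wanderingSpan S (LinearMap.ker ((adjoint S : H →L[ℂ] H) : H →ₗ[ℂ] H) ⊓ L))ᗮ := by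
  apply le_antisymm
  · rintro _ ⟨x, ⟨hxL, hx⟩, rfl⟩
    refine ⟨hL.1 x hxL, mem_orthogonal_wanderingSpan.2 fun k w hw => ?_⟩
    cases k with
    | zero =>
      change ⟪w, S x⟫_ℂ = 0
      rw [← adjoint_inner_left, show adjoint S w = 0 from hw.1, inner_zero_left]
    | succ k =>
      change ⟪(S ^ (k + 1)) w, S x⟫_ℂ = 0
      rw [pow_succ', mul_apply_eq_comp, inner_map_map_of_adjoint_mul_self hS]
      exact mem_orthogonal_wanderingSpan.1 hx k w hw
  · rintro x ⟨hxL, hx⟩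
    have hxW : x ∈ (LinearMap.ker ((adjoint S : H →L[ℂ] H) : H →ₗ[ℂ] H) ⊓ L)ᗮ := by
      refine (Submodule.mem_orthogonal _ _).2 fun w hw => ?_
      simpa using mem_orthogonal_wanderingSpan.1 hx 0 w hw
    refine ⟨adjoint S x, ⟨hL.2 x hxL, mem_orthogonal_wanderingSpan.2 fun k w hw => ?_⟩,
      apply_adjoint_apply_eq_self_of_mem_orthogonal hS hL.1 hL.2 hxL hxW⟩
    rw [adjoint_inner_right, ← mul_apply_eq_comp, ← pow_succ']
    exact mem_orthogonal_wanderingSpan.1 hx (k + 1) w hw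

lemma le_orthogonal_hiso_of_map_eq (hS : adjoint S * S = 1) {M : Submodule ℂ H}
    (hM : M.map (S : H →ₗ[ℂ] H) = M) : M ≤ (Hiso S)ᗮ := by
  have hM' : ∀ x ∈ M, adjoint S x ∈ M := by
    intro x hx
    rw [← hM] at hx
    obtain ⟨y, hy, rfl⟩ := hx
    change adjoint S (S y) ∈ M
    rwa [adjoint_apply_apply_of_adjoint_mul_self hS]
  have hpow : ∀ k : ℕ, ∀ w ∈ LinearMap.ker ((adjoint S : H →L[ℂ] H) : H →ₗ[ℂ] H), ∀ m ∈ M,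
      ⟪(S ^ k) w, m⟫_ℂ = 0 := by
    intro k
    induction k with
    | zero =>
      intro w hw m hm
      rw [← hM] at hm
      obtain ⟨y, -, rfl⟩ := hm
      change ⟪w, S y⟫_ℂ = 0
      rw [← adjoint_inner_left, show adjoint S w = 0 from hw, inner_zero_left]
    | succ k ih =>
      intro w hw m hm
      rw [pow_succ', mul_apply_eq_comp, ← adjoint_inner_right]
      exact ih w hw _ (hM' m hm)
  intro m hm
  change m ∈ (wanderingSpan S _).topologicalClosureᗮ
  rw [Submodule.orthogonal_closure]
  exact mem_orthogonal_wanderingSpan.2 fun k w hw => hpow k w hw m hm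

lemma pureOn_of_le_hiso (hS : adjoint S * S = 1) (hL : L ≤ Hiso S) : PureOn S L := by
  intro M _ hML hM
  refine (Submodule.eq_bot_iff M).2 fun m hm => (inner_self_eq_zero (𝕜 := ℂ)).1 ?_
  exact (Submodule.mem_orthogonal (Hiso S) m).1 (le_orthogonal_hiso_of_map_eq hS hM hm) m
    (hL (hML hm))

lemma le_hiso_of_pureOn (hS : adjoint S * S = 1) (hLc : IsClosed (L : Set H))
    (hL : Reduces S L) (h : PureOn S L) : L ≤ Hiso S := by
  set W := wanderingSpan S (LinearMap.ker ((adjoint S : H →L[ℂ] H) : H →ₗ[ℂ] H) ⊓ L)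
  have hWL : W.topologicalClosure ≤ L :=
    Submodule.topologicalClosure_minimal _
      (iSup_le fun k => Submodule.map_le_iff_le_comap.2 fun w hw => pow_apply_mem hL.1 k hw.2) hLc
  have hW : W.topologicalClosure ≤ Hiso S :=
    Submodule.topologicalClosure_mono (iSup_mono fun k => Submodule.map_mono inf_le_left)
  have hbot : W.topologicalClosureᗮ ⊓ L = ⊥ := by
    rw [Submodule.orthogonal_closure, inf_comm]
    exact h _ (hLc.inter (Submodule.isClosed_orthogonal _)) inf_le_left
      (map_inf_orthogonal_wanderingSpan hS hL)
  calc L = W.topologicalClosure ⊔ W.topologicalClosureᗮ ⊓ L :=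
        (Submodule.sup_orthogonal_inf_of_hasOrthogonalProjection hWL).symm
    _ ≤ Hiso S := by rw [hbot, sup_bot_eq]; exact hW

theorem statement5 (S : H →L[ℂ] H) (hS : adjoint S * S = 1)
    (L : Submodule ℂ H) (hLclosed : IsClosed (L : Set H)) (hLred : Reduces S L)
    (PL Piso : H →L[ℂ] H)
    (hPL : IsOrthoProj PL L) (hPiso : IsOrthoProj Piso (Hiso S)) :
    [PureOn S L, L ≤ Hiso S, PL * Piso = PL].TFAE := by
  tfae_have 1 → 2 := le_hiso_of_pureOn hS hLclosed hLred
  tfae_have 2 → 1 := pureOn_of_le_hiso hS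
  tfae_have 2 ↔ 3 :=
    (hPL.mul_eq_left_iff hPiso (Submodule.isClosed_topologicalClosure _)).symm
  tfae_finish
end

section
/- Let (V_1,...,V_n) be an n-tuple of doubly non-commuting isometries on a complex Hilbert space H. (1) Let A, B ⊆ {1,...,n} with A ≠ B, and let L_A, L_B be closed subspaces of H reducing all V_1,...,V_n such that V_i restricted to L_A is a pure isometry for i ∈ A and unitary for i ∈ A^c, while V_i restricted to L_B is a pure isometry for i ∈ B and unitary for i ∈ B^c. Then L_A ⊥ L_B. (2) Suppose that for each A ⊆ {1,...,n}, L_A is a closed subspace reducing all V_1,...,V_n such that V_i restricted to L_A is a pure isometry for i ∈ A and unitary for i ∈ A^c, and suppose H = ⊕_{A ⊆ {1,...,n}} L_A (algebraically). Then L_A = H_A for every A. -/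
open ContinuousLinearMap

variable {H : Type*} [NormedAddCommGroup H] [InnerProductSpace ℂ H] [CompleteSpace H]

/-- `(V 1, ..., V n)` is an `n`-tuple of doubly non-commuting isometries with structure
constants `z i j`: each `V i` is an isometry (`(V i)* (V i) = 1`) and
`(V i)* (V j) = conj (z i j) • (V j) (V i)*` for all `i ≠ j`. -/
def DoublyNonCommuting {n : ℕ} (z : Fin n → Fin n → ℂ) (V : Fin n → H →L[ℂ] H) : Prop :=
  (∀ i, adjoint (V i) * V i = 1) ∧
    ∀ i j, i ≠ j →
      adjoint (V i) * V j = (starRingEnd ℂ) (z i j) • (V j * adjoint (V i))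

/-- The space `H_A = ⋂_{i ∈ A} H_i^iso ∩ ⋂_{i ∈ Aᶜ} H_i^uni` (the range of the
projection `P_A`). -/
noncomputable def HA {n : ℕ} (V : Fin n → H →L[ℂ] H) (A : Finset (Fin n)) : Submodule ℂ H :=
  (⨅ i ∈ A, Hiso (V i)) ⊓ ⨅ i ∈ Aᶜ, Huni (V i)

/-!
Everything reduces to the Wold decomposition of a single isometry `S`: `H^iso = (H^uni)ᗮ`,
and `H^uni` is the largest subspace on which `S` is unitary. If `L` reduces `S`, the projection
onto `L` commutes with `S` and so maps `H^uni` into `L ⊓ H^uni`, a subspace on which `S` is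
unitary; when `S` is pure on `L` this forces `L ⟂ H^uni`, i.e. `L ≤ H^iso`. Hence each `L_A`
lies in `H_A`, and the spaces `H_A` are pairwise orthogonal: for `A ≠ B` some index separates
them into an `H^iso` and an `H^uni` part. Both claims follow, the second because
`H = ⊕ L_A` leaves no room in `H_A` beyond `L_A`.
-/

open Submodule
open scoped InnerProductSpace

theorem star_pow_mul_pow_of_star_mul_self {M : Type*} [Monoid M] [StarMul M] {a : M}
    (h : star a * a = 1) (k : ℕ) : star (a ^ k) * a ^ k = 1 := by
  induction k with
  | zero => simp
  | succ k ih =>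
    rw [pow_succ, star_mul, mul_assoc, ← mul_assoc (star (a ^ k)), ih, one_mul, h]

section Isometry

variable {S : H →L[ℂ] H}

theorem adjoint_pow_mul_pow (hS : adjoint S * S = 1) (k : ℕ) : adjoint (S ^ k) * S ^ k = 1 := by
  rw [← star_eq_adjoint] at hS ⊢
  exact star_pow_mul_pow_of_star_mul_self hS k

theorem inner_pow_apply_pow_apply (hS : adjoint S * S = 1) (k : ℕ) (x y : H) :
    ⟪(S ^ k) x, (S ^ k) y⟫_ℂ = ⟪x, y⟫_ℂ := by
  rw [← adjoint_inner_right, ← mul_apply_eq_comp, adjoint_pow_mul_pow hS, one_apply_eq_self]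

theorem adjoint_apply_apply (hS : adjoint S * S = 1) (x : H) : adjoint S (S x) = x := by
  rw [← mul_apply_eq_comp, hS, one_apply_eq_self]

omit [CompleteSpace H] in
theorem mem_huni_iff {x : H} : x ∈ Huni S ↔ ∀ k : ℕ, ∃ y, (S ^ k) y = x := by
  simp only [Huni, Submodule.mem_iInf, LinearMap.mem_range, ContinuousLinearMap.coe_coe]

theorem mem_orthogonal_hiso_iff {x : H} :
    x ∈ (Hiso S)ᗮ ↔ ∀ (k : ℕ) (u : H), adjoint S u = 0 → ⟪(S ^ k) u, x⟫_ℂ = 0 := by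
  refine ⟨fun hx k u hu => hx _ ?_, fun hx => ?_⟩
  · exact le_topologicalClosure _ (le_iSup (fun k => map ((S ^ k : H →L[ℂ] H) : H →ₗ[ℂ] H)
      (LinearMap.ker ((adjoint S : H →L[ℂ] H) : H →ₗ[ℂ] H))) k ⟨u, hu, rfl⟩)
  · have : Hiso S ≤ (ℂ ∙ x)ᗮ := by
      refine topologicalClosure_minimal _ (iSup_le fun k => ?_) (isClosed_orthogonal _)
      rintro _ ⟨u, hu, rfl⟩
      exact mem_orthogonal_singleton_iff_inner_left.2 (hx k u hu)
    exact fun y hy => inner_eq_zero_symm.1 (mem_orthogonal_singleton_iff_inner_right.1 (this hy))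

theorem orthogonal_hiso_le_range (hS : adjoint S * S = 1) :
    (Hiso S)ᗮ ≤ LinearMap.range (S : H →ₗ[ℂ] H) := by
  intro x hx
  have hker : x ∈ (LinearMap.ker (adjoint S : H →ₗ[ℂ] H))ᗮ := fun u hu => by
    simpa using mem_orthogonal_hiso_iff.1 hx 0 u hu
  have hclosed : IsClosed (LinearMap.range (S : H →ₗ[ℂ] H) : Set H) := by
    rw [LinearMap.coe_range, ContinuousLinearMap.coe_coe]
    exact ((isometry_iff_adjoint_comp_self S).2 hS).isClosedEmbedding.isClosed_range
  rwa [orthogonal_ker, adjoint_adjoint, hclosed.submodule_topologicalClosure_eq] at hker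

theorem adjoint_mem_orthogonal_hiso {x : H} (hx : x ∈ (Hiso S)ᗮ) : adjoint S x ∈ (Hiso S)ᗮ := by
  refine mem_orthogonal_hiso_iff.2 fun k u hu => ?_
  rw [adjoint_inner_right, ← mul_apply_eq_comp, ← pow_succ']
  exact mem_orthogonal_hiso_iff.1 hx (k + 1) u hu

theorem orthogonal_hiso_le_huni (hS : adjoint S * S = 1) : (Hiso S)ᗮ ≤ Huni S := by
  suffices ∀ k : ℕ, ∀ x ∈ (Hiso S)ᗮ, ∃ y, (S ^ k) y = x from
    fun x hx => mem_huni_iff.2 fun k => this k x hx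
  intro k
  induction k with
  | zero => exact fun x _ => ⟨x, rfl⟩
  | succ k ih =>
    intro x hx
    obtain ⟨y, hy⟩ := ih _ (adjoint_mem_orthogonal_hiso hx)
    obtain ⟨w, rfl⟩ := orthogonal_hiso_le_range hS hx
    refine ⟨y, ?_⟩
    rw [pow_succ', mul_apply_eq_comp, hy, ContinuousLinearMap.coe_coe, adjoint_apply_apply hS]

theorem huni_le_orthogonal_hiso (hS : adjoint S * S = 1) : Huni S ≤ (Hiso S)ᗮ := by
  intro x hx
  refine mem_orthogonal_hiso_iff.2 fun k u hu => ?_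
  obtain ⟨w, rfl⟩ := mem_huni_iff.1 hx (k + 1)
  rw [pow_succ, mul_apply_eq_comp, inner_pow_apply_pow_apply hS, ← adjoint_inner_left, hu,
    inner_zero_left]

theorem huni_eq_orthogonal_hiso (hS : adjoint S * S = 1) : Huni S = (Hiso S)ᗮ :=
  (huni_le_orthogonal_hiso hS).antisymm (orthogonal_hiso_le_huni hS)

theorem hiso_eq_orthogonal_huni (hS : adjoint S * S = 1) : Hiso S = (Huni S)ᗮ := by
  rw [huni_eq_orthogonal_hiso hS, orthogonal_orthogonal_eq_closure]
  exact (isClosed_topologicalClosure _).submodule_topologicalClosure_eq.symm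

theorem isClosed_huni (hS : adjoint S * S = 1) : IsClosed (Huni S : Set H) :=
  huni_eq_orthogonal_hiso hS ▸ isClosed_orthogonal _

end Isometry

section Reducing

variable {S : H →L[ℂ] H} {L N : Submodule ℂ H}

omit [CompleteSpace H] in
theorem UnitaryOn.le_huni (h : UnitaryOn S L) : L ≤ Huni S := by
  suffices ∀ k : ℕ, ∀ x ∈ L, ∃ y, (S ^ k) y = x from
    fun x hx => mem_huni_iff.2 fun k => this k x hx
  intro k
  induction k with
  | zero => exact fun x _ => ⟨x, rfl⟩
  | succ k ih =>
    intro x hx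
    rw [← h] at hx
    obtain ⟨y, hy, rfl⟩ := hx
    obtain ⟨w, rfl⟩ := ih y hy
    exact ⟨w, by rw [pow_succ', mul_apply_eq_comp]; rfl⟩

theorem unitaryOn_huni (hS : adjoint S * S = 1) : UnitaryOn S (Huni S) := by
  refine le_antisymm ?_ fun x hx => ?_
  · rintro _ ⟨x, hx, rfl⟩
    refine mem_huni_iff.2 fun k => ?_
    obtain ⟨y, rfl⟩ := mem_huni_iff.1 hx k
    exact ⟨S y, by rw [ContinuousLinearMap.coe_coe, ← mul_apply_eq_comp, ← mul_apply_eq_comp,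
      (Commute.self_pow S k).eq]⟩
  · obtain ⟨w, rfl⟩ := mem_huni_iff.1 hx 1
    refine ⟨w, mem_huni_iff.2 fun k => ?_, by simp⟩
    obtain ⟨y, hy⟩ := mem_huni_iff.1 hx (k + 1)
    refine ⟨y, ?_⟩
    rw [pow_one] at hy
    rw [← adjoint_apply_apply hS ((S ^ k) y), ← mul_apply_eq_comp S, ← pow_succ', hy,
      adjoint_apply_apply hS]

theorem UnitaryOn.inf_of_reduces (hS : adjoint S * S = 1) (hL : Reduces S L)
    (hN : UnitaryOn S N) : UnitaryOn S (L ⊓ N) := by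
  refine le_antisymm ((map_inf_le _).trans (inf_le_inf (map_le_iff_le_comap.2 hL.1) hN.le))
    fun x ⟨hxL, hxN⟩ => ?_
  rw [← hN] at hxN
  obtain ⟨y, hy, rfl⟩ := hxN
  refine ⟨y, ⟨?_, hy⟩, rfl⟩
  simpa [adjoint_apply_apply hS] using hL.2 _ hxL

theorem Reduces.commute_starProjection (hL : Reduces S L) [L.HasOrthogonalProjection] :
    Commute L.starProjection S := by
  ext x
  simp only [mul_apply_eq_comp]
  refine eq_starProjection_of_mem_orthogonal (hL.1 _ (L.starProjection_apply_mem x)) ?_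
  rw [← map_sub]
  intro u hu
  rw [← adjoint_inner_left]
  exact sub_starProjection_mem_orthogonal x _ (hL.2 u hu)

omit [CompleteSpace H] in
theorem apply_mem_huni_of_commute {T : H →L[ℂ] H} (hT : Commute T S) {x : H} (hx : x ∈ Huni S) :
    T x ∈ Huni S := by
  refine mem_huni_iff.2 fun k => ?_
  obtain ⟨y, rfl⟩ := mem_huni_iff.1 hx k
  exact ⟨T y, by rw [← mul_apply_eq_comp, ← mul_apply_eq_comp, (hT.pow_right k).eq]⟩

theorem PureOn.isOrtho_huni (hS : adjoint S * S = 1) (hLc : IsClosed (L : Set H))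
    (hL : Reduces S L) (hp : PureOn S L) : L ⟂ Huni S := by
  have hbot : L ⊓ Huni S = ⊥ :=
    hp _ (hLc.inter (isClosed_huni hS)) inf_le_left ((unitaryOn_huni hS).inf_of_reduces hS hL)
  have : CompleteSpace L := hLc.completeSpace_coe
  refine isOrtho_comm.1 (isOrtho_iff_le.2 fun y hy => ?_)
  rw [← starProjection_apply_eq_zero_iff, ← mem_bot ℂ, ← hbot]
  exact ⟨L.starProjection_apply_mem y, apply_mem_huni_of_commute hL.commute_starProjection hy⟩

theorem PureOn.le_hiso (hS : adjoint S * S = 1) (hLc : IsClosed (L : Set H))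
    (hL : Reduces S L) (hp : PureOn S L) : L ≤ Hiso S :=
  hiso_eq_orthogonal_huni hS ▸ (hp.isOrtho_huni hS hLc hL).le

end Reducing

theorem Submodule.eq_of_le_of_pairwise_isOrtho_of_iSup_eq_top {𝕜 E ι : Type*} [RCLike 𝕜]
    [NormedAddCommGroup E] [InnerProductSpace 𝕜 E] {L M : ι → Submodule 𝕜 E}
    (hLM : ∀ i, L i ≤ M i) (hM : Pairwise fun i j => M i ⟂ M j) (hL : ⨆ i, L i = ⊤) (i : ι) :
    L i = M i := by
  have hcover : M i ≤ L i ⊔ (M i)ᗮ := by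
    refine le_top.trans (hL ▸ iSup_le fun j => ?_)
    rcases eq_or_ne j i with rfl | hji
    · exact le_sup_left
    · exact ((hLM j).trans (hM hji).le).trans le_sup_right
  rw [← inf_eq_right.2 hcover, sup_inf_assoc_of_le _ (hLM i), inf_comm, inf_orthogonal_eq_bot,
    sup_bot_eq]

section Tuple

variable {n : ℕ} {V : Fin n → H →L[ℂ] H}

theorem le_HA (hV : ∀ i, adjoint (V i) * V i = 1) {A : Finset (Fin n)} {L : Submodule ℂ H}
    (hLc : IsClosed (L : Set H)) (hL : ∀ i, Reduces (V i) L) (hpure : ∀ i ∈ A, PureOn (V i) L)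
    (huni : ∀ i ∉ A, UnitaryOn (V i) L) : L ≤ HA V A :=
  le_inf (le_iInf₂ fun i hi => (hpure i hi).le_hiso (hV i) hLc (hL i))
    (le_iInf₂ fun i hi => (huni i (Finset.mem_compl.1 hi)).le_huni)

theorem HA_isOrtho_of_mem_of_notMem (hV : ∀ i, adjoint (V i) * V i = 1) {A B : Finset (Fin n)}
    {i : Fin n} (hiA : i ∈ A) (hiB : i ∉ B) : HA V A ⟂ HA V B := by
  refine isOrtho_iff_le.2 ((inf_le_left.trans (iInf₂_le i hiA)).trans ?_)
  rw [hiso_eq_orthogonal_huni (hV i)]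
  exact orthogonal_le (inf_le_right.trans (iInf₂_le i (Finset.mem_compl.2 hiB)))

theorem HA_isOrtho (hV : ∀ i, adjoint (V i) * V i = 1) {A B : Finset (Fin n)} (hAB : A ≠ B) :
    HA V A ⟂ HA V B := by
  obtain ⟨i, hiA, hiB⟩ | ⟨i, hiB, hiA⟩ : (∃ i ∈ A, i ∉ B) ∨ ∃ i ∈ B, i ∉ A := by
    by_contra! h
    exact hAB (Finset.Subset.antisymm h.1 h.2)
  · exact HA_isOrtho_of_mem_of_notMem hV hiA hiB
  · exact (HA_isOrtho_of_mem_of_notMem hV hiB hiA).symm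

end Tuple

theorem statement12_general {n : ℕ} (z : Fin n → Fin n → ℂ)
    (V : Fin n → H →L[ℂ] H) (hV : DoublyNonCommuting z V) :
    (∀ A B : Finset (Fin n), A ≠ B → ∀ LA LB : Submodule ℂ H,
        IsClosed (LA : Set H) → IsClosed (LB : Set H) →
        (∀ i, Reduces (V i) LA) → (∀ i, Reduces (V i) LB) →
        (∀ i ∈ A, PureOn (V i) LA) → (∀ i ∉ A, UnitaryOn (V i) LA) →
        (∀ i ∈ B, PureOn (V i) LB) → (∀ i ∉ B, UnitaryOn (V i) LB) →
        LA ≤ LBᗮ) ∧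
    (∀ L : Finset (Fin n) → Submodule ℂ H,
        (∀ A, IsClosed ((L A : Set H))) →
        (∀ A i, Reduces (V i) (L A)) →
        (∀ A, ∀ i ∈ A, PureOn (V i) (L A)) →
        (∀ A, ∀ i ∉ A, UnitaryOn (V i) (L A)) →
        iSupIndep L → (⨆ A, L A) = ⊤ →
        ∀ A, L A = HA V A) := by
  refine ⟨fun A B hAB LA LB hLAc hLBc hLA hLB hpA huA hpB huB => ?_,
    fun L hLc hL hp hu _ hsup => ?_⟩
  · exact ((HA_isOrtho hV.1 hAB).mono (le_HA hV.1 hLAc hLA hpA huA)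
      (le_HA hV.1 hLBc hLB hpB huB)).le
  · exact eq_of_le_of_pairwise_isOrtho_of_iSup_eq_top
      (fun A => le_HA hV.1 (hLc A) (hL A) (hp A) (hu A)) (fun _ _ => HA_isOrtho hV.1) hsup

theorem statement12 {n : ℕ} (hn : 1 ≤ n) (z : Fin n → Fin n → ℂ)
    (hz1 : ∀ i j, i ≠ j → ‖z i j‖ = 1)
    (hz2 : ∀ i j, i ≠ j → z j i = (starRingEnd ℂ) (z i j))
    (V : Fin n → H →L[ℂ] H) (hV : DoublyNonCommuting z V) :
    (∀ A B : Finset (Fin n), A ≠ B → ∀ LA LB : Submodule ℂ H,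
        IsClosed (LA : Set H) → IsClosed (LB : Set H) →
        (∀ i, Reduces (V i) LA) → (∀ i, Reduces (V i) LB) →
        (∀ i ∈ A, PureOn (V i) LA) → (∀ i ∉ A, UnitaryOn (V i) LA) →
        (∀ i ∈ B, PureOn (V i) LB) → (∀ i ∉ B, UnitaryOn (V i) LB) →
        LA ≤ LBᗮ) ∧
    (∀ L : Finset (Fin n) → Submodule ℂ H,
        (∀ A, IsClosed ((L A : Set H))) →
        (∀ A i, Reduces (V i) (L A)) →
        (∀ A, ∀ i ∈ A, PureOn (V i) (L A)) →
        (∀ A, ∀ i ∉ A, UnitaryOn (V i) (L A)) →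
        iSupIndep L → (⨆ A, L A) = ⊤ →
        ∀ A, L A = HA V A) :=
  statement12_general z V hV
end
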